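/- For any graph G, λ_g(G) = λ(G) + 1 if and only if no LD-code of G is global, i.e., every LD-set of G of minimum cardinality λ(G) fails to be an LD-set of Ḡ. -/

import Mathlib

variable {V : Type*}

/-- `S` is a dominating set of `G`: every vertex outside `S` has a neighbor in `S`. -/
def IsDominatingSet (G : SimpleGraph V) (S : Set V) : Prop :=
  ∀ v ∉ S, (G.neighborSet v ∩ S).Nonempty

/-- `S` is a locating-dominating set of `G`. -/
def IsLDSet (G : SimpleGraph V) (S : Set V) : Prop :=
  IsDominatingSet G S ∧
    ∀ u ∉ S, ∀ v ∉ S, G.neighborSet u ∩ S = G.neighborSet v ∩ S → u = v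

/-- The location-domination number of `G`. -/
noncomputable def ldNum [Fintype V] (G : SimpleGraph V) : ℕ :=
  sInf {n | ∃ S : Set V, IsLDSet G S ∧ S.ncard = n}

/-- `S` is a global LD-set of `G`: an LD-set of both `G` and its complement. -/
def IsGlobalLDSet (G : SimpleGraph V) (S : Set V) : Prop :=
  IsLDSet G S ∧ IsLDSet Gᶜ S

/-- The global location-domination number of `G`. -/
noncomputable def gldNum [Fintype V] (G : SimpleGraph V) : ℕ :=
  sInf {n | ∃ S : Set V, IsGlobalLDSet G S ∧ S.ncard = n}

/-!
An LD-code `S` of `G` that is not global can be repaired by adding one vertex. Since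
`Gᶜ.neighborSet v ∩ S = S \ G.neighborSet v` for `v ∉ S`, the locating condition passes from `G`
to `Gᶜ` unchanged, so `S` can only fail to dominate `Gᶜ`, i.e. some `u ∉ S` is adjacent to all
of `S`. Adding `u` keeps `S` locating-dominating in both graphs, and every other vertex outside
`S` sees a different trace on `S` than `u`, hence misses some vertex of `S` in `G`. Thus
`λ ≤ λ_g ≤ λ + 1`.
-/

open Set

def IsLocatingSet (G : SimpleGraph V) (S : Set V) : Prop :=
  ∀ u ∉ S, ∀ v ∉ S, G.neighborSet u ∩ S = G.neighborSet v ∩ S → u = v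

section Sets

variable {G : SimpleGraph V} {S T : Set V}

theorem IsDominatingSet.mono (hS : IsDominatingSet G S) (hST : S ⊆ T) : IsDominatingSet G T :=
  fun v hv => (hS v fun h => hv (hST h)).mono (inter_subset_inter_right _ hST)

theorem IsLocatingSet.mono (hS : IsLocatingSet G S) (hST : S ⊆ T) : IsLocatingSet G T := by
  intro u hu v hv huv
  refine hS u (fun h => hu (hST h)) v (fun h => hv (hST h)) ?_
  rw [← inter_eq_self_of_subset_right hST, ← inter_assoc, huv, inter_assoc]

theorem IsLDSet.mono (hS : IsLDSet G S) (hST : S ⊆ T) : IsLDSet G T :=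
  ⟨hS.1.mono hST, IsLocatingSet.mono hS.2 hST⟩

theorem isLDSet_univ (G : SimpleGraph V) : IsLDSet G univ :=
  ⟨fun v hv => absurd (mem_univ v) hv, fun u hu => absurd (mem_univ u) hu⟩

theorem compl_neighborSet_inter_of_notMem {v : V} (hv : v ∉ S) :
    Gᶜ.neighborSet v ∩ S = S \ G.neighborSet v := by
  ext s
  simp only [mem_inter_iff, SimpleGraph.mem_neighborSet, SimpleGraph.compl_adj, mem_sdiff]
  exact ⟨fun ⟨⟨_, hna⟩, hs⟩ => ⟨hs, hna⟩,
    fun ⟨hs, hna⟩ => ⟨⟨fun h => hv (h ▸ hs), hna⟩, hs⟩⟩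

theorem IsLocatingSet.compl (hS : IsLocatingSet G S) : IsLocatingSet Gᶜ S := by
  intro u hu v hv huv
  rw [compl_neighborSet_inter_of_notMem hu, compl_neighborSet_inter_of_notMem hv] at huv
  refine hS u hu v hv ?_
  rw [inter_comm, ← sdiff_sdiff_right_self, huv, sdiff_sdiff_right_self, inter_comm]

theorem isDominatingSet_compl_iff :
    IsDominatingSet Gᶜ S ↔ ∀ v ∉ S, ¬ S ⊆ G.neighborSet v := by
  refine forall₂_congr fun v hv => ?_
  rw [compl_neighborSet_inter_of_notMem hv, sdiff_nonempty]

theorem IsLDSet.exists_subset_neighborSet_of_not_compl (hS : IsLDSet G S)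
    (hSc : ¬ IsLDSet Gᶜ S) : ∃ u ∉ S, S ⊆ G.neighborSet u := by
  by_contra! h
  exact hSc ⟨isDominatingSet_compl_iff.2 h, IsLocatingSet.compl hS.2⟩

theorem IsLDSet.isGlobalLDSet_insert (hS : IsLDSet G S) {u : V} (hu : u ∉ S)
    (huS : S ⊆ G.neighborSet u) : IsGlobalLDSet G (insert u S) := by
  refine ⟨hS.mono (subset_insert u S), fun v hv => ?_,
    (IsLocatingSet.compl hS.2).mono (subset_insert u S)⟩
  obtain ⟨hvu, hvS⟩ := not_or.1 hv
  have hvS' : ¬ S ⊆ G.neighborSet v := fun hvN => hvu <| hS.2 v hvS u hu <| by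
    rw [inter_eq_self_of_subset_right hvN, inter_eq_self_of_subset_right huS]
  have hvSc : (Gᶜ.neighborSet v ∩ S).Nonempty := by
    rw [compl_neighborSet_inter_of_notMem hvS]
    exact sdiff_nonempty.2 hvS'
  exact hvSc.mono (inter_subset_inter_right _ (subset_insert u S))

theorem IsLDSet.exists_isGlobalLDSet_ncard_le (hS : IsLDSet G S) :
    ∃ T, IsGlobalLDSet G T ∧ T.ncard ≤ S.ncard + 1 := by
  by_cases hSc : IsLDSet Gᶜ S
  · exact ⟨S, ⟨hS, hSc⟩, Nat.le_succ _⟩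
  obtain ⟨u, hu, huS⟩ := hS.exists_subset_neighborSet_of_not_compl hSc
  exact ⟨insert u S, hS.isGlobalLDSet_insert hu huS, ncard_insert_le u S⟩

end Sets

section Numbers

variable [Fintype V] (G : SimpleGraph V)

theorem exists_isLDSet_ncard_eq_ldNum : ∃ S, IsLDSet G S ∧ S.ncard = ldNum G :=
  Nat.sInf_mem (s := {n | ∃ S, IsLDSet G S ∧ S.ncard = n}) ⟨_, univ, isLDSet_univ G, rfl⟩

theorem exists_isGlobalLDSet_ncard_eq_gldNum : ∃ S, IsGlobalLDSet G S ∧ S.ncard = gldNum G :=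
  Nat.sInf_mem (s := {n | ∃ S, IsGlobalLDSet G S ∧ S.ncard = n})
    ⟨_, univ, ⟨isLDSet_univ G, isLDSet_univ Gᶜ⟩, rfl⟩

variable {G}

theorem ldNum_le_ncard {S : Set V} (hS : IsLDSet G S) : ldNum G ≤ S.ncard :=
  Nat.sInf_le (s := {n | ∃ T, IsLDSet G T ∧ T.ncard = n}) ⟨S, hS, rfl⟩

theorem gldNum_le_ncard {S : Set V} (hS : IsGlobalLDSet G S) : gldNum G ≤ S.ncard :=
  Nat.sInf_le (s := {n | ∃ T, IsGlobalLDSet G T ∧ T.ncard = n}) ⟨S, hS, rfl⟩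

variable (G)

theorem ldNum_le_gldNum : ldNum G ≤ gldNum G := by
  obtain ⟨T, hT, hTcard⟩ := exists_isGlobalLDSet_ncard_eq_gldNum G
  exact hTcard ▸ ldNum_le_ncard hT.1

theorem gldNum_le_ldNum_add_one : gldNum G ≤ ldNum G + 1 := by
  obtain ⟨S, hS, hScard⟩ := exists_isLDSet_ncard_eq_ldNum G
  obtain ⟨T, hT, hTcard⟩ := hS.exists_isGlobalLDSet_ncard_le
  exact hScard ▸ (gldNum_le_ncard hT).trans hTcard

end Numbers

theorem stmt13 [Fintype V] (G : SimpleGraph V) :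
    gldNum G = ldNum G + 1 ↔
      ∀ S : Set V, IsLDSet G S → S.ncard = ldNum G → ¬ IsLDSet Gᶜ S := by
  constructor
  · intro h S hS hScard hSc
    have := gldNum_le_ncard ⟨hS, hSc⟩
    omega
  · intro h
    obtain ⟨T, hT, hTcard⟩ := exists_isGlobalLDSet_ncard_eq_gldNum G
    have := ldNum_le_gldNum G
    have := gldNum_le_ldNum_add_one G
    by_contra hne
    exact h T hT.1 (by omega) hT.2
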